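/- Let n ≥ 1 and q ∈ ℂ with 0 < |q| < 1. Then (1 − ĥτ̂_n)V_n equals the orthogonal complement U_n^⊥ = {F ∈ H_n : ⟨F, Ū⟩ = 0 for all Ū ∈ U_n}, and H_n decomposes as the direct sum H_n = U_n ⊕ (1 − ĥτ̂_n)V_n. (Decomposition (2.18) of the diagonal subalgebra, with Im V_n = U_n^⊥.) -/

import Mathlib

noncomputable section

/-- Dilation operator: `(dil q k a)(z) = a(q^k z)`.
A formal Laurent series `a(z) = ∑_{m ≤ N} a_m z^m ∈ ℂ((z⁻¹))` is encoded as the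
Hahn series `F : LaurentSeries ℂ` with `F.coeff j = a_{-j}` (support bounded below,
i.e. finitely many positive powers of `z`); dilation sends `a_m ↦ q^{k m} a_m`,
i.e. `coeff j ↦ q^{-(k j)} * coeff j`. -/
def dil (q : ℂ) (k : ℤ) (F : LaurentSeries ℂ) : LaurentSeries ℂ where
  coeff := fun j => q ^ (-(k * j)) * F.coeff j
  isPWO_support' := by
    apply F.isPWO_support'.mono
    intro j hj
    simp only [Function.mem_support] at hj ⊢
    intro h
    exact hj (by rw [h, mul_zero])

/-- `Res a = a₀`, the coefficient of `z⁰`. -/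
def Res (F : LaurentSeries ℂ) : ℂ := F.coeff 0

/-- The bilinear pairing `⟨F, G⟩ = ∑_j Res (F_j G_j)` on `H_n = (ℂ((z⁻¹)))^n`. -/
def pair {n : ℕ} (F G : Fin n → LaurentSeries ℂ) : ℂ := ∑ j, Res (F j * G j)

/-- The operator `ĥτ̂_n` on `H_n`: `(ĥτ̂_n F)_j (z) = F_{j+1 mod n} (q z)`. -/
def htau (q : ℂ) {n : ℕ} [NeZero n] (F : Fin n → LaurentSeries ℂ) :
    Fin n → LaurentSeries ℂ := fun j => dil q 1 (F (j + 1))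

/-- `F ∈ U_n`, i.e. `F = (u(z), u(q⁻¹ z), …, u(q^{-(n-1)} z))` for some `u ∈ ℂ((z⁻¹))`. -/
def InU (q : ℂ) {n : ℕ} (F : Fin n → LaurentSeries ℂ) : Prop :=
  ∃ u : LaurentSeries ℂ, ∀ j : Fin n, F j = dil q (-((j : ℕ) : ℤ)) u

end

/-!
Dilation `a(z) ↦ a(q^k z)` is a ring automorphism of `ℂ((z⁻¹))` (for `q ≠ 0`) that preserves
residues, so `⟨F, (u(q^{-j} z))_j⟩ = Res (S_F · u)` with the twisted sum `S_F(z) = ∑_j F_j(q^j z)`.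
Pairing against monomials `u = z^m` shows that `U_n^⊥` is the kernel of `F ↦ S_F`.
On `V_n` the operator `1 − ĥτ̂_n` telescopes under `S`, so its image lies in that kernel;
conversely, if `S_F = 0` then `F = (1 − ĥτ̂_n) G` for `G_j(z) = ∑_{i ≥ j} F_i(q^{i-j} z)`,
and `G_0 = S_F = 0`. Finally `S` sends `(u(q^{-j} z))_j` to `n · u`, so
`F = U + (F − U)` with `u = S_F / n` is the unique splitting.
-/

open Finset

section Dilation

variable (q : ℂ) (k : ℤ)

@[simp]
lemma dil_coeff (F : LaurentSeries ℂ) (j : ℤ) :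
    (dil q k F).coeff j = q ^ (-(k * j)) * F.coeff j := rfl

@[simp]
lemma dil_zero : dil q k 0 = 0 := by
  ext; simp

lemma dil_add (X Y : LaurentSeries ℂ) : dil q k (X + Y) = dil q k X + dil q k Y := by
  ext; simp [mul_add]

lemma dil_sub (X Y : LaurentSeries ℂ) : dil q k (X - Y) = dil q k X - dil q k Y := by
  ext; simp [mul_sub]

lemma Res_dil (F : LaurentSeries ℂ) : Res (dil q k F) = Res F := by
  simp [Res]

variable {q}

lemma dil_dil (hq : q ≠ 0) (a b : ℤ) (F : LaurentSeries ℂ) :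
    dil q a (dil q b F) = dil q (a + b) F := by
  ext j
  simp only [dil_coeff, ← mul_assoc, ← zpow_add₀ hq]
  ring_nf

lemma dil_dil_neg (hq : q ≠ 0) (F : LaurentSeries ℂ) : dil q k (dil q (-k) F) = F := by
  ext j
  simp [dil_dil hq]

lemma dil_neg_dil (hq : q ≠ 0) (F : LaurentSeries ℂ) : dil q (-k) (dil q k F) = F := by
  simpa using dil_dil_neg (-k) hq F

lemma support_dil (hq : q ≠ 0) (F : LaurentSeries ℂ) : (dil q k F).support = F.support := by
  ext j
  simp [zpow_ne_zero _ hq]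

lemma dil_mul (hq : q ≠ 0) (X Y : LaurentSeries ℂ) :
    dil q k (X * Y) = dil q k X * dil q k Y := by
  ext a
  simp only [dil_coeff, HahnSeries.coeff_mul, support_dil k hq, mul_sum]
  refine sum_congr rfl fun ij hij => ?_
  obtain ⟨-, -, rfl⟩ := mem_antidiagonal.mp hij
  rw [mul_add, neg_add, zpow_add₀ hq]
  ring

end Dilation

noncomputable def twistedSum (q : ℂ) {n : ℕ} (F : Fin n → LaurentSeries ℂ) : LaurentSeries ℂ :=
  ∑ j : Fin n, dil q ((j : ℕ) : ℤ) (F j)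

section TwistedSum

variable {q : ℂ} {n : ℕ}

lemma twistedSum_add (F G : Fin n → LaurentSeries ℂ) :
    twistedSum q (F + G) = twistedSum q F + twistedSum q G := by
  simp [twistedSum, dil_add, sum_add_distrib]

lemma twistedSum_sub (F G : Fin n → LaurentSeries ℂ) :
    twistedSum q (F - G) = twistedSum q F - twistedSum q G := by
  simp [twistedSum, dil_sub, sum_sub_distrib]

lemma twistedSum_dil_neg (hq : q ≠ 0) (u : LaurentSeries ℂ) :
    twistedSum q (fun j : Fin n => dil q (-(j : ℕ)) u) = (n : ℂ) • u := by
  simp only [twistedSum, dil_dil_neg _ hq, sum_const, card_univ, Fintype.card_fin,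
    (Nat.cast_smul_eq_nsmul ℂ n u).symm]

lemma pair_dil_neg (hq : q ≠ 0) (F : Fin n → LaurentSeries ℂ) (u : LaurentSeries ℂ) :
    pair F (fun j => dil q (-(j : ℕ)) u) = Res (twistedSum q F * u) := by
  simp only [pair, twistedSum, sum_mul, Res, HahnSeries.coeff_sum]
  refine sum_congr rfl fun j _ => ?_
  change Res _ = Res _
  rw [← Res_dil q (j : ℕ), dil_mul _ hq, dil_dil_neg _ hq]

lemma eq_zero_of_forall_Res_mul_eq_zero {S : LaurentSeries ℂ} (h : ∀ u, Res (S * u) = 0) :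
    S = 0 := by
  ext m
  simpa [Res, HahnSeries.coeff_mul_single] using h (HahnSeries.single (-m) 1)

lemma forall_InU_pair_eq_zero_iff (hq : q ≠ 0) (F : Fin n → LaurentSeries ℂ) :
    (∀ U, InU q U → pair F U = 0) ↔ twistedSum q F = 0 := by
  constructor
  · intro h
    exact eq_zero_of_forall_Res_mul_eq_zero fun u => by
      rw [← pair_dil_neg hq]
      exact h _ ⟨u, fun _ => rfl⟩
  · rintro hF U ⟨u, hU⟩
    rw [show U = _ from funext hU, pair_dil_neg hq, hF, zero_mul, Res, HahnSeries.coeff_zero]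

end TwistedSum

section Telescoping

variable {q : ℂ} {n : ℕ}

lemma twistedSum_htau (hq : q ≠ 0) {G : Fin (n + 1) → LaurentSeries ℂ} (hG : G 0 = 0) :
    twistedSum q (htau q G) = twistedSum q G := by
  have shift (j : Fin (n + 1)) : dil q ((j : ℕ) : ℤ) (htau q G j) =
      dil q (((j + 1 : Fin (n + 1)) : ℕ) : ℤ) (G (j + 1)) := by
    rw [htau, dil_dil hq]
    by_cases hj : j = Fin.last n
    · simp [hj, hG]
    · rw [Fin.val_add_one_of_lt (Fin.lt_last_iff_ne_last.mpr hj)]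
      push_cast
      rfl
  simp only [twistedSum, shift]
  exact Fintype.sum_equiv (Equiv.addRight 1) _ _ fun _ => rfl

lemma exists_eq_sub_htau_of_twistedSum_eq_zero (hq : q ≠ 0) {F : Fin (n + 1) → LaurentSeries ℂ}
    (hF : twistedSum q F = 0) :
    ∃ G : Fin (n + 1) → LaurentSeries ℂ, G 0 = 0 ∧ ∀ j, F j = G j - htau q G j := by
  set S : Fin (n + 1) → LaurentSeries ℂ := fun j => ∑ i ∈ Ici j, dil q ((i : ℕ) : ℤ) (F i)
  have hS0 : S 0 = 0 := by simpa [S, Ici_zero_eq_univ, twistedSum] using hF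
  refine ⟨fun j => dil q (-((j : ℕ) : ℤ)) (S j), by simp [hS0], fun j => ?_⟩
  by_cases hj : j = Fin.last n
  · have hSlast : S (Fin.last n) = dil q n (F (Fin.last n)) := by
      simp [S, ← Fin.top_eq_last]
    simp [hj, htau, hS0, hSlast, dil_neg_dil _ hq]
  · have hlt := Fin.lt_last_iff_ne_last.mpr hj
    have hSj : S j = dil q ((j : ℕ) : ℤ) (F j) + S (j + 1) := by
      simp only [S]
      rw [Fin.Ici_add_one_eq_Ioi (by simpa [Fin.lt_def] using hlt), ← Ioi_insert,
        sum_insert notMem_Ioi_self]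
    dsimp only
    rw [htau, dil_dil hq, Fin.val_add_one_of_lt hlt, hSj, dil_add, dil_neg_dil _ hq]
    push_cast
    ring_nf

lemma exists_sub_htau_iff_twistedSum_eq_zero (hq : q ≠ 0) (F : Fin (n + 1) → LaurentSeries ℂ) :
    (∃ G : Fin (n + 1) → LaurentSeries ℂ, G 0 = 0 ∧ ∀ j, F j = G j - htau q G j) ↔
      twistedSum q F = 0 := by
  refine ⟨?_, exists_eq_sub_htau_of_twistedSum_eq_zero hq⟩
  rintro ⟨G, hG0, hFG⟩
  rw [show F = G - htau q G from funext hFG, twistedSum_sub, twistedSum_htau hq hG0, sub_self]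

end Telescoping

theorem orthogonal_decomposition_general (n : ℕ) [NeZero n] (q : ℂ)
    (hq0 : 0 < ‖q‖) :
    (∀ F : Fin n → LaurentSeries ℂ,
        (∃ G : Fin n → LaurentSeries ℂ, G 0 = 0 ∧ ∀ j, F j = G j - htau q G j) ↔
          ∀ Ubar : Fin n → LaurentSeries ℂ, InU q Ubar → pair F Ubar = 0) ∧
    (∀ F : Fin n → LaurentSeries ℂ,
        ∃! UV : (Fin n → LaurentSeries ℂ) × (Fin n → LaurentSeries ℂ),
          InU q UV.1 ∧
          (∃ G : Fin n → LaurentSeries ℂ, G 0 = 0 ∧ ∀ j, UV.2 j = G j - htau q G j) ∧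
          ∀ j, F j = UV.1 j + UV.2 j) := by
  obtain ⟨N, rfl⟩ := Nat.exists_eq_succ_of_ne_zero (NeZero.ne n)
  have hq : q ≠ 0 := norm_pos_iff.mp hq0
  have hn : ((N + 1 : ℕ) : ℂ) ≠ 0 := Nat.cast_ne_zero.mpr N.succ_ne_zero
  refine ⟨fun F => (exists_sub_htau_iff_twistedSum_eq_zero hq F).trans
    (forall_InU_pair_eq_zero_iff hq F).symm, fun F => ?_⟩
  simp only [exists_sub_htau_iff_twistedSum_eq_zero hq]
  set u := ((N + 1 : ℕ) : ℂ)⁻¹ • twistedSum q F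
  set U : Fin (N + 1) → LaurentSeries ℂ := fun j => dil q (-((j : ℕ) : ℤ)) u
  have hU : twistedSum q U = twistedSum q F := by
    rw [twistedSum_dil_neg hq, smul_inv_smul₀ hn]
  refine ⟨(U, F - U), ⟨⟨u, fun _ => rfl⟩, by rw [twistedSum_sub, hU, sub_self], fun j => by simp⟩, ?_⟩
  rintro ⟨U', V'⟩ ⟨⟨u', hU'⟩, hV', hF⟩
  have hF' : F = U' + V' := funext hF
  have hUU' : U' = fun j : Fin (N + 1) => dil q (-((j : ℕ) : ℤ)) u' := funext hU'
  have hu' : u' = u := by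
    rw [eq_inv_smul_iff₀ hn, ← twistedSum_dil_neg hq, ← hUU', hF',
      twistedSum_add, hV', add_zero]
  have hUU : U' = U := by rw [hUU', hu']
  simp only [Prod.mk.injEq, hUU, true_and]
  exact eq_sub_of_add_eq' (hUU ▸ hF'.symm)

/-- Decomposition (2.18): `(1 − ĥτ̂_n) V_n` is the orthogonal complement of `U_n`
(here `V_n = {F : F 0 = 0}`), and `H_n = U_n ⊕ (1 − ĥτ̂_n) V_n` is a direct sum. -/
theorem orthogonal_decomposition (n : ℕ) [NeZero n] (q : ℂ)
    (hq0 : 0 < ‖q‖) (hq1 : ‖q‖ < 1) :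
    (∀ F : Fin n → LaurentSeries ℂ,
        (∃ G : Fin n → LaurentSeries ℂ, G 0 = 0 ∧ ∀ j, F j = G j - htau q G j) ↔
          ∀ Ubar : Fin n → LaurentSeries ℂ, InU q Ubar → pair F Ubar = 0) ∧
    (∀ F : Fin n → LaurentSeries ℂ,
        ∃! UV : (Fin n → LaurentSeries ℂ) × (Fin n → LaurentSeries ℂ),
          InU q UV.1 ∧
          (∃ G : Fin n → LaurentSeries ℂ, G 0 = 0 ∧ ∀ j, UV.2 j = G j - htau q G j) ∧
          ∀ j, F j = UV.1 j + UV.2 j) :=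
  orthogonal_decomposition_general n q hq0
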